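/- arXiv:2306.14034 — 2 statements merged into one kernel-verified Lean document; each statement's English description precedes it below -/
import Mathlib

section
/- Let Λ be a numerical semigroup with conductor c = c(Λ) and rank k = k(Λ), and let λ be an integer with c ≤ λ < 2c. Let j be the unique index with 0 ≤ j ≤ k−1 and λ_j ≤ λ − c < λ_{j+1}. Then λ − λ_j is an order-j seed of Λ if and only if λ is not the sum of two elements of the set {λ_{j+1}, λ_{j+2}, …, λ_{k−1}}. -/
/-
Write `x = λ - λ_j`. A pair `j < i ≤ i'` violating the seed condition for `x` is a decomposition
`λ = λ_i + λ_{i'}` with `λ_{i'} < x`. The bound `λ_{i'} < x` is automatic once `λ_i > λ_j`, and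
`λ_i ≥ λ_{j+1} > λ - c` forces `λ_{i'} < c`, i.e. `i' < k`. So violating pairs are exactly the
decompositions of `λ` as a sum of two elements among `λ_{j+1}, …, λ_{k-1}`.
-/

/-- A numerical semigroup: a cofinite submonoid of ℕ, viewed as a set of naturals. -/
def IsNumericalSemigroup (S : Set ℕ) : Prop :=
  0 ∈ S ∧ (∀ a ∈ S, ∀ b ∈ S, a + b ∈ S) ∧ ∃ N : ℕ, ∀ n : ℕ, N ≤ n → n ∈ S

/-- The conductor: the smallest `N` such that every `n ≥ N` belongs to `S`. -/
noncomputable def sgConductor (S : Set ℕ) : ℕ :=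
  sInf {N : ℕ | ∀ n : ℕ, N ≤ n → n ∈ S}

/-- The genus: the number of gaps. -/
noncomputable def sgGenus (S : Set ℕ) : ℕ :=
  Sᶜ.ncard

/-- The rank `k(Λ) = c(Λ) - g(Λ)`. -/
noncomputable def sgRank (S : Set ℕ) : ℕ :=
  sgConductor S - sgGenus S

/-- The multiplicity: the smallest nonzero element. -/
noncomputable def sgMultiplicity (S : Set ℕ) : ℕ :=
  sInf {n : ℕ | n ∈ S ∧ n ≠ 0}

/-- The Frobenius number: the largest gap, i.e. the conductor minus one. -/
noncomputable def sgFrobenius (S : Set ℕ) : ℕ :=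
  sgConductor S - 1

/-- `sgElem S j` is the element `λ_j` of `S = {λ_0 = 0 < λ_1 < λ_2 < ⋯}`. -/
noncomputable def sgElem (S : Set ℕ) (j : ℕ) : ℕ :=
  Nat.nth (· ∈ S) j

/-- The jump `u_j = λ_{j+1} - λ_j`. -/
noncomputable def sgJump (S : Set ℕ) (j : ℕ) : ℕ :=
  sgElem S (j + 1) - sgElem S j

/-- The left elements: elements of `S` smaller than the Frobenius number. -/
def sgLeftElements (S : Set ℕ) : Set ℕ :=
  {x : ℕ | x ∈ S ∧ x + 1 < sgConductor S}

/-- A minimal generator: a nonzero element not the sum of two nonzero elements. -/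
def IsMinimalGenerator (S : Set ℕ) (x : ℕ) : Prop :=
  x ∈ S ∧ x ≠ 0 ∧ ¬ ∃ a ∈ S, ∃ b ∈ S, a ≠ 0 ∧ b ≠ 0 ∧ a + b = x

/-- A right generator: a minimal generator larger than the Frobenius number. -/
def IsRightGenerator (S : Set ℕ) (x : ℕ) : Prop :=
  IsMinimalGenerator S x ∧ sgFrobenius S < x

/-- A strong generator: a right generator `μ` such that `μ + m(Λ)` is a minimal
generator of `Λ ∖ {μ}`. -/
noncomputable def IsStrongGenerator (S : Set ℕ) (x : ℕ) : Prop :=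
  IsRightGenerator S x ∧ IsMinimalGenerator (S \ {x}) (x + sgMultiplicity S)

/-- A new generator of `Λ`: a minimal generator of `Λ` that is not a minimal
generator of `Λ ∪ {F(Λ)}`. -/
noncomputable def IsNewGenerator (S : Set ℕ) (x : ℕ) : Prop :=
  IsMinimalGenerator S x ∧ ¬ IsMinimalGenerator (S ∪ {sgFrobenius S}) x

/-- `x` (an element `λ_s ≥ c(Λ)`) is an order-`p` seed of `Λ` if
`x + λ_p ≠ λ_i + λ_j` for all `p < i ≤ j < s`, i.e. for all `i ≤ j` with
`p < i` and `λ_j < x`. -/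
noncomputable def IsSeed (S : Set ℕ) (p x : ℕ) : Prop :=
  sgConductor S ≤ x ∧ ∀ i j : ℕ, p < i → i ≤ j → sgElem S j < x →
    x + sgElem S p ≠ sgElem S i + sgElem S j

/-- `T` is a child of `S`: obtained by removing one right generator. -/
def IsChild (T S : Set ℕ) : Prop :=
  ∃ μ : ℕ, IsRightGenerator S μ ∧ T = S \ {μ}

/-- A grandchild: a child of a child. -/
def IsGrandchild (T S : Set ℕ) : Prop :=
  ∃ C : Set ℕ, IsChild C S ∧ IsChild T C

/-- A great-grandchild: a child of a grandchild. -/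
def IsGreatGrandchild (T S : Set ℕ) : Prop :=
  ∃ C : Set ℕ, IsGrandchild C S ∧ IsChild T C

/-- `⟨a,b,c,…⟩|_κ`: the smallest numerical semigroup containing a given set. -/
def sgClosure (A : Set ℕ) : Set ℕ :=
  ⋂₀ {S : Set ℕ | IsNumericalSemigroup S ∧ A ⊆ S}

namespace IsNumericalSemigroup

variable {S : Set ℕ}

theorem mem_of_conductor_le (hS : IsNumericalSemigroup S) {n : ℕ} (hn : sgConductor S ≤ n) :
    n ∈ S := by
  obtain ⟨-, -, N, hN⟩ := hS
  exact Nat.sInf_mem (s := {N | ∀ n, N ≤ n → n ∈ S}) ⟨N, hN⟩ n hn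

theorem infinite (hS : IsNumericalSemigroup S) : S.Infinite :=
  (Set.Ici_infinite _).mono fun _ hn => hS.mem_of_conductor_le hn

theorem sgElem_strictMono (hS : IsNumericalSemigroup S) : StrictMono (sgElem S) :=
  Nat.nth_strictMono hS.infinite

theorem sgRank_eq_count [DecidablePred (· ∈ S)] (hS : IsNumericalSemigroup S) :
    sgRank S = Nat.count (· ∈ S) (sgConductor S) := by
  set c := sgConductor S
  have hgaps : Sᶜ = ↑{n ∈ Finset.range c | n ∉ S} := by
    ext n
    simp only [Set.mem_compl_iff, Finset.coe_filter, Finset.mem_range, Set.mem_ofPred_eq,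
      iff_and_self]
    exact fun hn => lt_of_not_ge fun hcn => hn (hS.mem_of_conductor_le hcn)
  have hsplit := Finset.card_filter_add_card_filter_not (s := Finset.range c) (· ∈ S)
  rw [sgRank, sgGenus, hgaps, Set.ncard_coe_finset, Nat.count_eq_card_filter_range]
  rw [Finset.card_range] at hsplit
  omega

theorem sgElem_lt_conductor_iff (hS : IsNumericalSemigroup S) {s : ℕ} :
    sgElem S s < sgConductor S ↔ s < sgRank S := by
  classical
  rw [hS.sgRank_eq_count]
  exact (Nat.lt_nth_iff_count_lt (p := (· ∈ S)) hS.infinite).symm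

end IsNumericalSemigroup

theorem statement1_general (S : Set ℕ) (hS : IsNumericalSemigroup S)
    (lam j : ℕ)
    (hc : sgConductor S ≤ lam)
    (hj1 : sgElem S j ≤ lam - sgConductor S)
    (hj2 : lam - sgConductor S < sgElem S (j + 1)) :
    IsSeed S j (lam - sgElem S j) ↔
      ¬ ∃ i₁ i₂ : ℕ, j < i₁ ∧ i₁ < sgRank S ∧ j < i₂ ∧ i₂ < sgRank S ∧
        sgElem S i₁ + sgElem S i₂ = lam := by
  constructor
  · rintro ⟨-, hseed⟩ ⟨i₁, i₂, hi₁, -, hi₂, -, hsum⟩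
    have not_sum : ∀ {a b : ℕ}, j < a → a ≤ b → sgElem S a + sgElem S b ≠ lam :=
      fun {a b} hja hab hsum_ab =>
        have := hS.sgElem_strictMono hja
        hseed a b hja hab (by omega) (by omega)
    rcases le_total i₁ i₂ with h | h
    · exact not_sum hi₁ h hsum
    · exact not_sum hi₂ h (by omega)
  · intro hno
    refine ⟨by omega, fun i i' hji hii' _ heq => hno ?_⟩
    have : sgElem S (j + 1) ≤ sgElem S i := hS.sgElem_strictMono.monotone hji
    have hi'k : i' < sgRank S := hS.sgElem_lt_conductor_iff.1 (by omega)
    exact ⟨i, i', hji, hii'.trans_lt hi'k, hji.trans_le hii', hi'k, by omega⟩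

theorem statement1 (S : Set ℕ) (hS : IsNumericalSemigroup S)
    (lam j : ℕ)
    (hc : sgConductor S ≤ lam) (hc2 : lam < 2 * sgConductor S)
    (hjk : j < sgRank S)
    (hj1 : sgElem S j ≤ lam - sgConductor S)
    (hj2 : lam - sgConductor S < sgElem S (j + 1)) :
    IsSeed S j (lam - sgElem S j) ↔
      ¬ ∃ i₁ i₂ : ℕ, j < i₁ ∧ i₁ < sgRank S ∧ j < i₂ ∧ i₂ < sgRank S ∧
        sgElem S i₁ + sgElem S i₂ = lam :=
  statement1_general S hS lam j hc hj1 hj2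
end

section
/- Let Λ be a numerical semigroup of rank k = k(Λ) ≥ 1 with conductor c = c(Λ), and let λ_s (with s ≥ k, so λ_s ≥ c) be a minimal generator of Λ; set Λ̃ = Λ∖{λ_s}, a numerical semigroup with conductor λ_s + 1 and rank s. Then the set of order-(k−1) seeds of Λ̃ equals the set of order-(k−1) seeds λ_t of Λ with λ_t > λ_s, together with: both additional elements λ_s + u_{k−1} and λ_s + u_{k−1} + 1 if λ_s = c; the single additional element λ_s + u_{k−1} if λ_s = c+1; and no additional elements if λ_s ≥ c+2. -/
section SGHelpers

attribute [local instance] Classical.propDecidable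

lemma sg_infinite {S : Set ℕ} (hS : IsNumericalSemigroup S) : S.Infinite := by
  obtain ⟨N, hN⟩ := hS.2.2
  exact Set.Infinite.mono (fun n hn => hN n hn) (Set.Ici_infinite N)

lemma sg_conductor_spec {S : Set ℕ} (hS : IsNumericalSemigroup S) :
    ∀ n : ℕ, sgConductor S ≤ n → n ∈ S := by
  have : sgConductor S ∈ {N : ℕ | ∀ n : ℕ, N ≤ n → n ∈ S} := Nat.sInf_mem hS.2.2
  exact this

lemma sg_gaps_finite {S : Set ℕ} (hS : IsNumericalSemigroup S) : Sᶜ.Finite := by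
  refine (Set.finite_Iio (sgConductor S)).subset ?_
  intro m hm
  by_contra h
  exact hm (sg_conductor_spec hS m (le_of_not_gt h))

lemma sg_count_eq {S : Set ℕ} (hS : IsNumericalSemigroup S) {n : ℕ}
    (hn : sgConductor S ≤ n) : Nat.count (· ∈ S) n = n - Sᶜ.ncard := by
  have hsub : Sᶜ ⊆ Set.Iio (sgConductor S) := by
    intro m hm
    by_contra h
    exact hm (sg_conductor_spec hS m (le_of_not_gt h))
  have hfin : Sᶜ.Finite := (Set.finite_Iio _).subset hsub
  have h1 : Nat.count (· ∈ S) n + ((Finset.range n).filter (fun m => ¬ m ∈ S)).card = n := by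
    rw [Nat.count_eq_card_filter_range]
    rw [Finset.card_filter_add_card_filter_not, Finset.card_range]
  have h2 : ((Finset.range n).filter (fun m => ¬ m ∈ S)) = hfin.toFinset := by
    ext m
    simp only [Finset.mem_filter, Finset.mem_range, Set.Finite.mem_toFinset, Set.mem_compl_iff]
    exact ⟨fun h => h.2, fun h => ⟨lt_of_lt_of_le (hsub h) hn, h⟩⟩
  have h3 : Sᶜ.ncard = hfin.toFinset.card := Set.ncard_eq_toFinset_card _ hfin
  rw [h2] at h1
  rw [h3]
  omega

lemma sg_elem_rank {S : Set ℕ} (hS : IsNumericalSemigroup S) :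
    sgElem S (sgRank S) = sgConductor S := by
  have hc : sgConductor S ∈ S := sg_conductor_spec hS _ le_rfl
  have h1 : Nat.count (· ∈ S) (sgConductor S) = sgRank S := by
    rw [sg_count_eq hS le_rfl]; rfl
  have := Nat.nth_count (p := (· ∈ S)) hc
  rw [h1] at this
  exact this

lemma sg_elem_mem {S : Set ℕ} (hS : IsNumericalSemigroup S) (j : ℕ) : sgElem S j ∈ S :=
  Nat.nth_mem_of_infinite (sg_infinite hS) j

lemma sg_elem_lt {S : Set ℕ} (hS : IsNumericalSemigroup S) {i j : ℕ} :
    sgElem S i < sgElem S j ↔ i < j :=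
  Nat.nth_lt_nth (sg_infinite hS)

lemma sg_elem_le {S : Set ℕ} (hS : IsNumericalSemigroup S) {i j : ℕ} :
    sgElem S i ≤ sgElem S j ↔ i ≤ j :=
  Nat.nth_le_nth (sg_infinite hS)

/-- Elements of `S` above `λ_{k-1}` are at least the conductor. -/
lemma sg_mem_c_le {S : Set ℕ} (hS : IsNumericalSemigroup S) (hk : 1 ≤ sgRank S)
    {x : ℕ} (hx : x ∈ S) (h : sgElem S (sgRank S - 1) < x) : sgConductor S ≤ x := by
  have hnth : Nat.nth (· ∈ S) (Nat.count (· ∈ S) x) = x := Nat.nth_count hx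
  have hlt : sgRank S - 1 < Nat.count (· ∈ S) x := by
    rw [← sg_elem_lt hS (i := sgRank S - 1) (j := Nat.count (· ∈ S) x)]
    show sgElem S _ < Nat.nth (· ∈ S) _
    rw [hnth]; exact h
  have hle : sgRank S ≤ Nat.count (· ∈ S) x := by omega
  have := (sg_elem_le hS).mpr hle
  rw [sg_elem_rank hS] at this
  calc sgConductor S ≤ sgElem S (Nat.count (· ∈ S) x) := this
    _ = x := hnth

/-- Seed condition reformulated in terms of elements rather than indices. -/
lemma sg_seed_iff {S : Set ℕ} (hS : IsNumericalSemigroup S) (p y : ℕ) :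
    IsSeed S p y ↔ sgConductor S ≤ y ∧ ∀ x1 x2 : ℕ, x1 ∈ S → x2 ∈ S →
      sgElem S p < x1 → x1 ≤ x2 → x2 < y → y + sgElem S p ≠ x1 + x2 := by
  constructor
  · rintro ⟨h1, h2⟩
    refine ⟨h1, fun x1 x2 hx1 hx2 hp hle hlt => ?_⟩
    have e1 : sgElem S (Nat.count (· ∈ S) x1) = x1 := Nat.nth_count hx1
    have e2 : sgElem S (Nat.count (· ∈ S) x2) = x2 := Nat.nth_count hx2
    have hpi : p < Nat.count (· ∈ S) x1 := by
      rw [← sg_elem_lt hS (i := p) (j := Nat.count (· ∈ S) x1)]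
      rw [e1]; exact hp
    have hij : Nat.count (· ∈ S) x1 ≤ Nat.count (· ∈ S) x2 := Nat.count_monotone _ hle
    have := h2 _ _ hpi hij (by rw [e2]; exact hlt)
    rw [e1, e2] at this
    exact this
  · rintro ⟨h1, h2⟩
    refine ⟨h1, fun i j hpi hij hlt => ?_⟩
    exact h2 _ _ (sg_elem_mem hS i) (sg_elem_mem hS j)
      ((sg_elem_lt hS).mpr hpi) ((sg_elem_le hS).mpr hij) hlt

end SGHelpers


theorem statement6 (S : Set ℕ) (hS : IsNumericalSemigroup S)
    (hk : 1 ≤ sgRank S) (s : ℕ) (hs : sgRank S ≤ s)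
    (hgen : IsMinimalGenerator S (sgElem S s)) :
    IsNumericalSemigroup (S \ {sgElem S s}) ∧
    sgConductor (S \ {sgElem S s}) = sgElem S s + 1 ∧
    sgRank (S \ {sgElem S s}) = s ∧
    (∀ y : ℕ,
      (IsSeed (S \ {sgElem S s}) (sgRank S - 1) y ↔
        ((IsSeed S (sgRank S - 1) y ∧ sgElem S s < y) ∨
         (sgElem S s = sgConductor S ∧
           (y = sgElem S s + sgJump S (sgRank S - 1) ∨
            y = sgElem S s + sgJump S (sgRank S - 1) + 1)) ∨
         (sgElem S s = sgConductor S + 1 ∧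
           y = sgElem S s + sgJump S (sgRank S - 1))))) := by
  classical
  -- Notation
  set c := sgConductor S with hc_def
  set g := Sᶜ.ncard with hg_def
  set k := sgRank S with hk_def
  set μ := sgElem S s with hμ_def
  set T := S \ {μ} with hT_def
  have hgaps : Sᶜ.Finite := sg_gaps_finite hS
  have hcS : ∀ n : ℕ, c ≤ n → n ∈ S := sg_conductor_spec hS
  have hck : sgElem S k = c := sg_elem_rank hS
  have hμS : μ ∈ S := sg_elem_mem hS s
  have hcμ : c ≤ μ := by
    rw [← hck]; exact (sg_elem_le hS).mpr hs
  have hμ0 : μ ≠ 0 := hgen.2.1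
  have hlpc : sgElem S (k - 1) < c := by
    rw [← hck]; exact (sg_elem_lt hS).mpr (by omega)
  set lp := sgElem S (k - 1) with hlp_def
  have hjump : lp + sgJump S (k - 1) = c := by
    show lp + (sgElem S (k - 1 + 1) - sgElem S (k - 1)) = c
    have hkk : k - 1 + 1 = k := by omega
    rw [hkk, hck]
    exact Nat.add_sub_cancel' hlpc.le
  -- Part 1: T is a numerical semigroup
  have hT : IsNumericalSemigroup T := by
    refine ⟨⟨hS.1, fun h => hμ0 ?_⟩, ?_, ⟨μ + 1, fun n hn => ?_⟩⟩
    · exact (Set.mem_singleton_iff.mp h).symm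
    · rintro a ⟨haS, haμ⟩ b ⟨hbS, hbμ⟩
      refine ⟨hS.2.1 a haS b hbS, fun hab => ?_⟩
      have hab' : a + b = μ := hab
      rcases Nat.eq_zero_or_pos a with ha0 | ha0
      · exact hbμ (by simp only [Set.mem_singleton_iff]; omega)
      rcases Nat.eq_zero_or_pos b with hb0 | hb0
      · exact haμ (by simp only [Set.mem_singleton_iff]; omega)
      exact hgen.2.2 ⟨a, haS, b, hbS, by omega, by omega, hab'⟩
    · exact ⟨hcS n (by omega), fun h => by simp only [Set.mem_singleton_iff] at h; omega⟩
  have hTinf : T.Infinite := sg_infinite hT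
  -- Part 2: conductor of T
  have hcT_mem : (μ + 1) ∈ {N : ℕ | ∀ n : ℕ, N ≤ n → n ∈ T} := by
    intro n hn
    exact ⟨hcS n (by omega), fun h => by simp only [Set.mem_singleton_iff] at h; omega⟩
  have hcT : sgConductor T = μ + 1 := by
    refine le_antisymm (Nat.sInf_le hcT_mem) ?_
    refine le_csInf ⟨_, hcT_mem⟩ (fun N hN => ?_)
    by_contra h
    push_neg at h
    exact (hN μ (by omega)).2 rfl
  -- Genus of T
  have hTgen : Tᶜ.ncard = g + 1 := by
    have hTc : Tᶜ = insert μ Sᶜ := by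
      ext n
      simp only [hT_def, Set.mem_compl_iff, Set.mem_diff, Set.mem_singleton_iff,
        Set.mem_insert_iff]
      by_cases hn : n = μ <;> by_cases hnS : n ∈ S <;> simp [hn, hnS, hμS]
    rw [hTc, Set.ncard_insert_of_notMem (by simp [hμS]) hgaps]
  -- count of μ in S
  have hcountμ : Nat.count (· ∈ S) μ = s := Nat.count_nth_of_infinite (p := (· ∈ S)) (sg_infinite hS) s
  have hμg : μ - g = s := by
    rw [← hcountμ, sg_count_eq hS hcμ]
  -- Part 3: rank of T
  have hrankT : sgRank T = s := by
    show sgConductor T - Tᶜ.ncard = s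
    rw [hcT, hTgen]
    omega
  -- lp is also the (k-1)-st element of T
  have hlpμ : lp < μ := lt_of_lt_of_le hlpc hcμ
  have hlpT : lp ∈ T := ⟨sg_elem_mem hS (k - 1), fun h => by
    simp only [Set.mem_singleton_iff] at h; omega⟩
  have hTelem : sgElem T (k - 1) = lp := by
    have hcount_eq : Nat.count (· ∈ T) lp = Nat.count (· ∈ S) lp := by
      rw [Nat.count_eq_card_filter_range, Nat.count_eq_card_filter_range]
      congr 1
      apply Finset.filter_congr
      intro m hm
      simp only [Finset.mem_range] at hm
      simp only [hT_def, Set.mem_diff, Set.mem_singleton_iff, eq_iff_iff]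
      constructor
      · exact fun h => h.1
      · exact fun h => ⟨h, by omega⟩
    have hcountlp : Nat.count (· ∈ S) lp = k - 1 :=
      Nat.count_nth_of_infinite (p := (· ∈ S)) (sg_infinite hS) (k - 1)
    have := Nat.nth_count (p := (· ∈ T)) hlpT
    rw [hcount_eq, hcountlp] at this
    exact this
  -- elements of S above lp, other than μ
  have hTc_le : ∀ x : ℕ, x ∈ S → lp < x → c ≤ x := fun x hx h => sg_mem_c_le hS hk hx h
  have hmemT : ∀ x : ℕ, x ∈ S → x ≠ μ → x ∈ T := by
    intro x h1 h2
    rw [hT_def]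
    exact ⟨h1, h2⟩
  have hmemT' : ∀ x : ℕ, x ∈ T → x ∈ S ∧ x ≠ μ := by
    intro x hx
    rw [hT_def] at hx
    exact ⟨hx.1, hx.2⟩
  clear_value lp T μ k g c
  refine ⟨hT, hcT, hrankT, fun y => ?_⟩
  rw [sg_seed_iff hT, sg_seed_iff hS, hcT, hTelem, ← hc_def, ← hlp_def]
  constructor
  · -- forward direction
    rintro ⟨hy1, hy2⟩
    by_cases hSS : c ≤ y ∧ ∀ x1 x2 : ℕ, x1 ∈ S → x2 ∈ S → lp < x1 → x1 ≤ x2 → x2 < y →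
        y + lp ≠ x1 + x2
    · exact Or.inl ⟨hSS, by omega⟩
    · -- y is not an S-seed: there is a representation involving μ
      have hcy : c ≤ y := by omega
      push_neg at hSS
      obtain ⟨x1, x2, hx1S, hx2S, hx1p, hx12, hx2y, hsum⟩ := hSS hcy
      have hx2p : lp < x2 := lt_of_lt_of_le hx1p hx12
      -- one of x1, x2 is μ
      have hμrep : ∃ z : ℕ, z ∈ S ∧ lp < z ∧ z < y ∧ y + lp = μ + z := by
        by_cases h1 : x1 = μ
        · exact ⟨x2, hx2S, hx2p, hx2y, by omega⟩
        by_cases h2 : x2 = μ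
        · exact ⟨x1, hx1S, hx1p, by omega, by omega⟩
        · exact absurd hsum (hy2 x1 x2 (hmemT x1 hx1S h1) (hmemT x2 hx2S h2) hx1p hx12 hx2y)
      obtain ⟨z, hzS, hzp, hzy, hzsum⟩ := hμrep
      have hzc : c ≤ z := hTc_le z hzS hzp
      -- Claim A: every v with c ≤ v < z equals μ
      have claimA : ∀ v : ℕ, c ≤ v → v < z → v = μ := by
        intro v hv1 hv2
        by_contra hvμ
        have hvS : v ∈ S := hcS v hv1
        obtain ⟨b, hb_def⟩ : ∃ b : ℕ, b = μ + (z - v) := ⟨_, rfl⟩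
        have hbS : b ∈ S := hcS b (by omega)
        have hbμ : b ≠ μ := by omega
        have hby : b < y := by omega
        have hvy : v < y := by omega
        have hvp : lp < v := by omega
        have hbp : lp < b := by omega
        rcases le_total v b with h | h
        · exact hy2 v b (hmemT v hvS hvμ) (hmemT b hbS hbμ) hvp h hby (by omega)
        · exact hy2 b v (hmemT b hbS hbμ) (hmemT v hvS hvμ) hbp h hvy (by omega)
      -- Claim B: every w with c ≤ w < μ equals z
      have claimB : ∀ w : ℕ, c ≤ w → w < μ → w = z := by
        intro w hw1 hw2
        by_contra hwz
        have hwS : w ∈ S := hcS w hw1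
        obtain ⟨b, hb_def⟩ : ∃ b : ℕ, b = z + (μ - w) := ⟨_, rfl⟩
        have hbS : b ∈ S := hcS b (by omega)
        have hbμ : b ≠ μ := by omega
        have hwμ : w ≠ μ := by omega
        have hby : b < y := by omega
        have hwy : w < y := by omega
        have hwp : lp < w := by omega
        have hbp : lp < b := by omega
        rcases le_total w b with h | h
        · exact hy2 w b (hmemT w hwS hwμ) (hmemT b hbS hbμ) hwp h hby (by omega)
        · exact hy2 b w (hmemT b hbS hbμ) (hmemT w hwS hwμ) hbp h hwy (by omega)
      have hμle : μ ≤ c + 1 := by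
        by_contra h
        have e1 := claimB c le_rfl (by omega)
        have e2 := claimB (c + 1) (by omega) (by omega)
        omega
      have hzle : z ≤ c + 1 := by
        by_contra h
        have e1 := claimA c le_rfl (by omega)
        have e2 := claimA (c + 1) (by omega) (by omega)
        omega
      rcases (by omega : μ = c ∨ μ = c + 1) with hμc | hμc
      · -- μ = c : second disjunct
        refine Or.inr (Or.inl ⟨hμc, ?_⟩)
        rcases (by omega : z = c ∨ z = c + 1) with hz | hz
        · left; omega
        · right; omega
      · -- μ = c + 1 : z must be c
        have hz : z = c := by
          rcases (by omega : z = c ∨ z = c + 1) with hz | hz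
          · exact hz
          · exact absurd (claimA c le_rfl (by omega)) (by omega)
        refine Or.inr (Or.inr ⟨hμc, ?_⟩)
        omega
  · -- backward direction
    rintro (⟨⟨hcy, hSS⟩, hμy⟩ | ⟨hμc, hy⟩ | ⟨hμc, hy⟩)
    · refine ⟨by omega, fun x1 x2 hx1 hx2 hp hle hlt => ?_⟩
      exact hSS x1 x2 (hmemT' x1 hx1).1 (hmemT' x2 hx2).1 hp hle hlt
    · -- μ = c, y = μ + u + δ
      refine ⟨by omega, fun x1 x2 hx1 hx2 hp hle hlt heq => ?_⟩
      have h1 : c ≤ x1 := hTc_le x1 (hmemT' x1 hx1).1 hp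
      have h2 : c ≤ x2 := hTc_le x2 (hmemT' x2 hx2).1 (by omega)
      have h1μ : x1 ≠ μ := (hmemT' x1 hx1).2
      have h2μ : x2 ≠ μ := (hmemT' x2 hx2).2
      rcases hy with hy | hy <;> omega
    · -- μ = c + 1, y = μ + u
      refine ⟨by omega, fun x1 x2 hx1 hx2 hp hle hlt heq => ?_⟩
      have h1 : c ≤ x1 := hTc_le x1 (hmemT' x1 hx1).1 hp
      have h2 : c ≤ x2 := hTc_le x2 (hmemT' x2 hx2).1 (by omega)
      have h1μ : x1 ≠ μ := (hmemT' x1 hx1).2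
      have h2μ : x2 ≠ μ := (hmemT' x2 hx2).2
      omega
end
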